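/- arXiv:1209.0108 — 2 statements merged into one kernel-verified Lean document; each statement's English description precedes it below -/
import Mathlib

section
/- Let N ≥ 1. For every θ ∈ [0, π], the spectral distance between coherent states on the same meridian satisfies ρ_N(θ) ≤ d_N(ψ^N_(0,θ), ψ^N_(0,0)) ≤ θ; moreover, for every φ ∈ (−π, π], the distance along the equator satisfies d_N(ψ^N_(φ,π/2), ψ^N_(0,π/2)) ≤ |φ|. -/
noncomputable section
open Matrix

/-- The diagonal matrix `H` with `H|m⟩ = m|m⟩`, `m = i - N/2` for index `i : Fin (N+1)`. -/
def Hmat (N : ℕ) : Matrix (Fin (N + 1)) (Fin (N + 1)) ℂ :=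
  Matrix.diagonal fun i => (i : ℂ) - (N : ℂ) / 2

/-- The raising operator `E` with `E|m⟩ = √((j-m)(j+m+1)) |m+1⟩`, `j = N/2`. -/
def Emat (N : ℕ) : Matrix (Fin (N + 1)) (Fin (N + 1)) ℂ := fun p q =>
  if (p : ℕ) = (q : ℕ) + 1 then (Real.sqrt ((N - (q : ℕ)) * ((q : ℕ) + 1)) : ℂ) else 0

def Fmat (N : ℕ) : Matrix (Fin (N + 1)) (Fin (N + 1)) ℂ := (Emat N)ᴴ

/-- The Dirac operator `D_N = [[1+H, F], [E, 1-H]]` in block form on `ℂ^(N+1) ⊗ ℂ²`. -/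
def DiracOp (N : ℕ) :
    Matrix (Fin (N + 1) ⊕ Fin (N + 1)) (Fin (N + 1) ⊕ Fin (N + 1)) ℂ :=
  Matrix.fromBlocks (1 + Hmat N) (Fmat N) (Emat N) (1 - Hmat N)

/-- `a ⊗ 1₂` in block form. -/
def tensorOne (N : ℕ) (a : Matrix (Fin (N + 1)) (Fin (N + 1)) ℂ) :
    Matrix (Fin (N + 1) ⊕ Fin (N + 1)) (Fin (N + 1) ⊕ Fin (N + 1)) ℂ :=
  Matrix.fromBlocks a 0 0 a

/-- The operator norm of a square complex matrix, acting on Euclidean space. -/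
def opNorm {n : Type*} [Fintype n] [DecidableEq n] (M : Matrix n n ℂ) : ℝ :=
  ‖Matrix.toEuclideanCLM (𝕜 := ℂ) M‖

/-- The spectral distance between two states (functionals) on `M_(N+1)(ℂ)`:
`d_N(ω, ω') = sup { |ω(a) − ω'(a)| : a = a*, ‖[D_N, a ⊗ 1₂]‖ ≤ 1 }`. -/
def specDist (N : ℕ) (ω ω' : Matrix (Fin (N + 1)) (Fin (N + 1)) ℂ → ℂ) : ℝ :=
  sSup {r : ℝ | ∃ a : Matrix (Fin (N + 1)) (Fin (N + 1)) ℂ, a.IsHermitian ∧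
    opNorm (DiracOp N * tensorOne N a - tensorOne N a * DiracOp N) ≤ 1 ∧
    r = ‖ω a - ω' a‖}

/-- The Bloch coherent state vector `|φ,θ⟩_N`, with component at index `i` (i.e. `m = i − N/2`)
equal to `C(N, i)^(1/2) e^(−i m φ) (sin(θ/2))^(N/2+m) (cos(θ/2))^(N/2−m)`. -/
def blochVec (N : ℕ) (φ θ : ℝ) : Fin (N + 1) → ℂ := fun i =>
  (Real.sqrt (N.choose i) : ℂ) * Complex.exp (-Complex.I * ((i : ℂ) - (N : ℂ) / 2) * (φ : ℂ)) *
    (Real.sin (θ / 2) : ℂ) ^ (i : ℕ) * (Real.cos (θ / 2) : ℂ) ^ (N - (i : ℕ))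

/-- The Bloch coherent state `ψ^N_(φ,θ)(a) = ⟨φ,θ| a |φ,θ⟩_N`. -/
def psiState (N : ℕ) (a : Matrix (Fin (N + 1)) (Fin (N + 1)) ℂ) (φ θ : ℝ) : ℂ :=
  star (blochVec N φ θ) ⬝ᵥ a.mulVec (blochVec N φ θ)

/-- The auxiliary distance `ρ_N(θ)`: the supremum of `|ψ^N_(0,θ)(a) − ψ^N_(0,0)(a)|` over
hermitian *diagonal* matrices `a` with `‖[D_N, a ⊗ 1₂]‖ ≤ 1`. -/
def rhoAux (N : ℕ) (θ : ℝ) : ℝ :=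
  sSup {r : ℝ | ∃ a : Matrix (Fin (N + 1)) (Fin (N + 1)) ℂ, a.IsHermitian ∧ a.IsDiag ∧
    opNorm (DiracOp N * tensorOne N a - tensorOne N a * DiracOp N) ≤ 1 ∧
    r = ‖psiState N a 0 θ - psiState N a 0 0‖}

/-!
Along a meridian (resp. a circle of latitude) the coherent vector `v_t` solves `v_t' = K v_t` for
the skew-Hermitian generator `K = (E - F)/2` (resp. `K = -iH`), so
`d/dt ⟨v_t, a v_t⟩ = ⟨v_t, (a K - K a) v_t⟩`. In block form `[D_N, a ⊗ 1]` has `[H, a]` and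
`-[H, a]` on the diagonal and `[F, a]`, `[E, a]` off it, so testing it against `(v, i v)`, of
squared norm 2 (resp. against `(v, 0)`), bounds `|⟨v, (a K - K a) v⟩|` by `‖[D_N, a ⊗ 1]‖ ≤ 1`.
The mean value theorem turns this into the bounds `θ` and `|φ|`, and `ρ_N ≤ d_N` because `ρ_N` is
a supremum over fewer test elements.
-/

section QuadraticForm

variable {n : Type*} [Fintype n]

lemma norm_star_dotProduct_mulVec_le [DecidableEq n] (M : Matrix n n ℂ) (u : n → ℂ) {c : ℝ}
    (hu : star u ⬝ᵥ u = c) : ‖star u ⬝ᵥ M *ᵥ u‖ ≤ opNorm M * c := by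
  set x : EuclideanSpace ℂ n := WithLp.toLp 2 u
  have hx : ‖x‖ ^ 2 = c := by
    rw [← Complex.ofReal_inj, ← hu, dotProduct_comm, Complex.ofReal_pow]
    exact (inner_self_eq_norm_sq_to_K x).symm
  calc ‖star u ⬝ᵥ M *ᵥ u‖ = ‖inner ℂ x (toEuclideanCLM (𝕜 := ℂ) M x)‖ := by
        rw [dotProduct_comm]; rfl
    _ ≤ ‖x‖ * (opNorm M * ‖x‖) :=
        (norm_inner_le_norm _ _).trans (by gcongr; exact (toEuclideanCLM (𝕜 := ℂ) M).le_opNorm x)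
    _ = opNorm M * c := by rw [← hx]; ring

lemma hasDerivAt_star_dotProduct_mulVec (a : Matrix n n ℂ) {γ : ℝ → n → ℂ} {γ' : n → ℂ}
    {t : ℝ} (hγ : HasDerivAt γ γ' t) :
    HasDerivAt (fun s => star (γ s) ⬝ᵥ a *ᵥ γ s)
      (star γ' ⬝ᵥ a *ᵥ γ t + star (γ t) ⬝ᵥ a *ᵥ γ') t := by
  have hγi := hasDerivAt_pi.1 hγ
  have hsum := HasDerivAt.fun_sum (u := Finset.univ) fun i _ =>
    (hγi i).star.mul (HasDerivAt.fun_sum (u := Finset.univ) fun j _ => (hγi j).const_mul (a i j))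
  refine hsum.congr_deriv ?_
  simp only [dotProduct, mulVec, Pi.star_apply, ← Finset.sum_add_distrib]

lemma star_mulVec_dotProduct_add_eq_commutator {K : Matrix n n ℂ} (hK : Kᴴ = -K)
    (a : Matrix n n ℂ) (v : n → ℂ) :
    star (K *ᵥ v) ⬝ᵥ a *ᵥ v + star v ⬝ᵥ a *ᵥ (K *ᵥ v) = star v ⬝ᵥ (a * K - K * a) *ᵥ v := by
  rw [star_mulVec, ← dotProduct_mulVec, hK, mulVec_mulVec, mulVec_mulVec, sub_mulVec,
    dotProduct_sub, neg_mul, neg_mulVec, dotProduct_neg]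
  ring

lemma norm_star_dotProduct_mulVec_sub_le {K a : Matrix n n ℂ} (hK : Kᴴ = -K)
    {γ : ℝ → n → ℂ} (hγ : ∀ t, HasDerivAt γ (K *ᵥ γ t) t) {C : ℝ}
    (hC : ∀ t, ‖star (γ t) ⬝ᵥ (a * K - K * a) *ᵥ γ t‖ ≤ C) (s t : ℝ) :
    ‖star (γ s) ⬝ᵥ a *ᵥ γ s - star (γ t) ⬝ᵥ a *ᵥ γ t‖ ≤ C * |s - t| := by
  refine convex_univ.norm_image_sub_le_of_norm_hasDerivWithin_le
    (fun r _ => (hasDerivAt_star_dotProduct_mulVec a (hγ r)).hasDerivWithinAt) (fun r _ => ?_)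
    (Set.mem_univ t) (Set.mem_univ s)
  rw [star_mulVec_dotProduct_add_eq_commutator hK]
  exact hC r

end QuadraticForm

lemma star_sumElim_dotProduct_fromBlocks_mulVec {m n α : Type*} [Fintype m] [Fintype n]
    [NonUnitalNonAssocSemiring α] [Star α] (A : Matrix m m α) (B : Matrix m n α)
    (C : Matrix n m α) (D : Matrix n n α) (x : m → α) (y : n → α) :
    star (Sum.elim x y) ⬝ᵥ fromBlocks A B C D *ᵥ Sum.elim x y =
      star x ⬝ᵥ A *ᵥ x + star x ⬝ᵥ B *ᵥ y + (star y ⬝ᵥ C *ᵥ x + star y ⬝ᵥ D *ᵥ y) := by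
  rw [Function.star_sumElim, fromBlocks_mulVec, sumElim_dotProduct_sumElim, dotProduct_add,
    dotProduct_add, Sum.elim_comp_inl, Sum.elim_comp_inr]

lemma Real.sqrt_mul_mul_sqrt_of_mul_eq {x y u w : ℝ} (hx : 0 ≤ x) (hy : 0 ≤ y)
    (h : x * u = y * w) : √(x * y) * √u = y * √w := by
  rw [← Real.sqrt_mul (mul_nonneg hx hy), mul_right_comm, h,
    show y * w * y = y ^ 2 * w by ring, Real.sqrt_mul (sq_nonneg y), Real.sqrt_sq hy]

section Spin

variable (N : ℕ)

lemma Hmat_conjTranspose : (Hmat N)ᴴ = Hmat N := by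
  simp [Hmat, diagonal_conjTranspose]

lemma Fmat_apply (p q : Fin (N + 1)) : Fmat N p q = Emat N q p := by
  rw [Fmat, conjTranspose_apply, Emat]
  split_ifs <;> simp

lemma Emat_mulVec_zero (v : Fin (N + 1) → ℂ) : (Emat N *ᵥ v) 0 = 0 := by
  simp [mulVec, dotProduct, Emat]

lemma Emat_mulVec_succ (v : Fin (N + 1) → ℂ) (q : Fin N) :
    (Emat N *ᵥ v) q.succ = (√((N - q) * (q + 1)) : ℝ) * v q.castSucc := by
  rw [mulVec, dotProduct, Fintype.sum_eq_single q.castSucc fun j hj => ?_]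
  · simp [Emat]
  · rw [Emat, if_neg, zero_mul]
    simpa [Fin.ext_iff, eq_comm] using hj

lemma Fmat_mulVec_last (v : Fin (N + 1) → ℂ) : (Fmat N *ᵥ v) (Fin.last N) = 0 := by
  simp [mulVec, dotProduct, Fmat_apply, Emat]

lemma Fmat_mulVec_castSucc (v : Fin (N + 1) → ℂ) (q : Fin N) :
    (Fmat N *ᵥ v) q.castSucc = (√((N - q) * (q + 1)) : ℝ) * v q.succ := by
  rw [mulVec, dotProduct, Fintype.sum_eq_single q.succ fun j hj => ?_]
  · simp [Fmat_apply, Emat]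
  · rw [Fmat_apply, Emat, if_neg, zero_mul]
    simpa [Fin.ext_iff] using hj

lemma conjTranspose_smul_Hmat : (-Complex.I • Hmat N)ᴴ = -(-Complex.I • Hmat N) := by
  rw [conjTranspose_smul, Hmat_conjTranspose, star_neg, Complex.star_def, Complex.conj_I,
    neg_smul]

lemma conjTranspose_smul_Emat_sub_Fmat :
    ((1 / 2 : ℂ) • (Emat N - Fmat N))ᴴ = -((1 / 2 : ℂ) • (Emat N - Fmat N)) := by
  rw [conjTranspose_smul, conjTranspose_sub, Fmat, conjTranspose_conjTranspose, ← smul_neg,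
    neg_sub]
  norm_num

def diracCommutator (a : Matrix (Fin (N + 1)) (Fin (N + 1)) ℂ) :
    Matrix (Fin (N + 1) ⊕ Fin (N + 1)) (Fin (N + 1) ⊕ Fin (N + 1)) ℂ :=
  DiracOp N * tensorOne N a - tensorOne N a * DiracOp N

lemma diracCommutator_eq_fromBlocks (a : Matrix (Fin (N + 1)) (Fin (N + 1)) ℂ) :
    diracCommutator N a = fromBlocks (Hmat N * a - a * Hmat N) (Fmat N * a - a * Fmat N)
      (Emat N * a - a * Emat N) (a * Hmat N - Hmat N * a) := by
  simp only [diracCommutator, DiracOp, tensorOne, fromBlocks_multiply, sub_eq_add_neg,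
    fromBlocks_neg, fromBlocks_add]
  congr 1 <;> noncomm_ring

lemma diracCommutator_zero : diracCommutator N 0 = 0 := by
  simp [diracCommutator, tensorOne]

lemma norm_star_dotProduct_commutator_Hmat_le (a : Matrix (Fin (N + 1)) (Fin (N + 1)) ℂ)
    {v : Fin (N + 1) → ℂ} (hv : star v ⬝ᵥ v = 1) :
    ‖star v ⬝ᵥ (a * (-Complex.I • Hmat N) - (-Complex.I • Hmat N) * a) *ᵥ v‖ ≤
      opNorm (diracCommutator N a) := by
  have hu : star (Sum.elim v (0 : Fin (N + 1) → ℂ)) ⬝ᵥ Sum.elim v 0 = ((1 : ℝ) : ℂ) := by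
    simp [Function.star_sumElim, sumElim_dotProduct_sumElim, hv]
  have hbound := norm_star_dotProduct_mulVec_le (diracCommutator N a) _ hu
  have key : star (Sum.elim v 0) ⬝ᵥ diracCommutator N a *ᵥ Sum.elim v 0 =
      star v ⬝ᵥ (Hmat N * a - a * Hmat N) *ᵥ v := by
    simp [diracCommutator_eq_fromBlocks, star_sumElim_dotProduct_fromBlocks_mulVec]
  have hcomm : a * (-Complex.I • Hmat N) - (-Complex.I • Hmat N) * a =
      Complex.I • (Hmat N * a - a * Hmat N) := by
    rw [Matrix.mul_smul, Matrix.smul_mul]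
    module
  rw [key, mul_one] at hbound
  rwa [hcomm, smul_mulVec, dotProduct_smul, smul_eq_mul, norm_mul, Complex.norm_I, one_mul]

lemma norm_star_dotProduct_commutator_Emat_sub_Fmat_le (a : Matrix (Fin (N + 1)) (Fin (N + 1)) ℂ)
    {v : Fin (N + 1) → ℂ} (hv : star v ⬝ᵥ v = 1) :
    ‖star v ⬝ᵥ (a * ((1 / 2 : ℂ) • (Emat N - Fmat N)) -
        ((1 / 2 : ℂ) • (Emat N - Fmat N)) * a) *ᵥ v‖ ≤ opNorm (diracCommutator N a) := by
  set u := Sum.elim v (Complex.I • v)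
  have hu : star u ⬝ᵥ u = ((2 : ℝ) : ℂ) := by
    simp only [u, Function.star_sumElim, sumElim_dotProduct_sumElim, star_smul, smul_dotProduct,
      dotProduct_smul, hv, Complex.star_def, Complex.conj_I, smul_eq_mul]
    push_cast
    linear_combination -Complex.I_sq
  have hbound := norm_star_dotProduct_mulVec_le (diracCommutator N a) u hu
  have key : star u ⬝ᵥ diracCommutator N a *ᵥ u = (2 * Complex.I) *
      (star v ⬝ᵥ (a * ((1 / 2 : ℂ) • (Emat N - Fmat N)) -
        ((1 / 2 : ℂ) • (Emat N - Fmat N)) * a) *ᵥ v) := by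
    simp only [u, diracCommutator_eq_fromBlocks, star_sumElim_dotProduct_fromBlocks_mulVec,
      star_smul, Complex.star_def, Complex.conj_I, smul_dotProduct, dotProduct_smul,
      mulVec_smul, smul_eq_mul, mul_smul_comm, smul_mul_assoc, Matrix.mul_sub, Matrix.sub_mul,
      sub_mulVec, smul_mulVec, dotProduct_sub, ← mulVec_mulVec]
    linear_combination (star v ⬝ᵥ Hmat N *ᵥ a *ᵥ v - star v ⬝ᵥ a *ᵥ Hmat N *ᵥ v) * Complex.I_sq
  rw [key, norm_mul] at hbound
  have h2I : ‖2 * Complex.I‖ = 2 := by simp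
  rw [h2I] at hbound
  linarith

lemma sub_mul_choose_eq_succ_mul_choose_succ (q : ℕ) (hq : q < N) :
    ((N : ℝ) - q) * N.choose q = (q + 1) * N.choose (q + 1) := by
  have h := congrArg (Nat.cast (R := ℝ)) (Nat.choose_succ_right_eq N q)
  push_cast [Nat.cast_sub hq.le] at h
  linarith

lemma sqrt_mul_sqrt_choose (q : ℕ) (hq : q < N) :
    √((N - q) * (q + 1)) * √(N.choose q) = (q + 1) * √(N.choose (q + 1)) :=
  Real.sqrt_mul_mul_sqrt_of_mul_eq (by linarith [(Nat.cast_lt (α := ℝ)).2 hq]) (by positivity)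
    (sub_mul_choose_eq_succ_mul_choose_succ N q hq)

lemma sqrt_mul_sqrt_choose_succ (q : ℕ) (hq : q < N) :
    √((N - q) * (q + 1)) * √(N.choose (q + 1)) = (N - q) * √(N.choose q) := by
  rw [mul_comm ((N : ℝ) - q)]
  exact Real.sqrt_mul_mul_sqrt_of_mul_eq (by positivity)
    (by linarith [(Nat.cast_lt (α := ℝ)).2 hq]) (sub_mul_choose_eq_succ_mul_choose_succ N q hq).symm

lemma norm_blochVec_apply (φ θ : ℝ) (i : Fin (N + 1)) :
    ‖blochVec N φ θ i‖ =
      √(N.choose i) * |Real.sin (θ / 2)| ^ (i : ℕ) * |Real.cos (θ / 2)| ^ (N - i) := by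
  simp [blochVec, Complex.norm_exp, -Complex.ofReal_sin, -Complex.ofReal_cos]

lemma star_blochVec_dotProduct_self (φ θ : ℝ) :
    star (blochVec N φ θ) ⬝ᵥ blochVec N φ θ = 1 := by
  have hterm : ∀ i : Fin (N + 1), star (blochVec N φ θ i) * blochVec N φ θ i =
      ((N.choose i * (Real.sin (θ / 2) ^ 2) ^ (i : ℕ) * (Real.cos (θ / 2) ^ 2) ^ (N - i) : ℝ) :
        ℂ) := by
    intro i
    rw [Complex.star_def, Complex.conj_mul', norm_blochVec_apply]
    norm_cast
    simp only [mul_pow, Real.sq_sqrt (Nat.cast_nonneg _), pow_right_comm _ _ 2, sq_abs]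
  have hbinom := add_pow (Real.sin (θ / 2) ^ 2) (Real.cos (θ / 2) ^ 2) N
  rw [Real.sin_sq_add_cos_sq, one_pow, ← Fin.sum_univ_eq_sum_range] at hbinom
  simp only [dotProduct, Pi.star_apply, hterm]
  rw [← Complex.ofReal_sum, ← Complex.ofReal_one, hbinom]
  congr 2 with i
  ring

lemma hasDerivAt_blochVec_phi (φ θ : ℝ) :
    HasDerivAt (fun φ => blochVec N φ θ) ((-Complex.I • Hmat N) *ᵥ blochVec N φ θ) φ := by
  refine hasDerivAt_pi.2 fun i => ?_
  set m : ℂ := (i : ℂ) - (N : ℂ) / 2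
  have hphase : HasDerivAt (fun t : ℝ => -Complex.I * m * (t : ℂ)) (-Complex.I * m) φ := by
    simpa using (hasDerivAt_id φ).ofReal_comp.const_mul (-Complex.I * m)
  refine (((hphase.cexp.const_mul (√(N.choose i) : ℂ)).mul_const
    ((Real.sin (θ / 2) : ℂ) ^ (i : ℕ))).mul_const
      ((Real.cos (θ / 2) : ℂ) ^ (N - (i : ℕ)))).congr_deriv ?_
  simp only [smul_mulVec, Hmat, mulVec_diagonal, Pi.smul_apply, smul_eq_mul, blochVec, m]
  ring

lemma blochVec_zero_apply (θ : ℝ) (i : Fin (N + 1)) :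
    blochVec N 0 θ i =
      ((√(N.choose i) * Real.sin (θ / 2) ^ (i : ℕ) * Real.cos (θ / 2) ^ (N - i) : ℝ) : ℂ) := by
  simp [blochVec]

lemma hasDerivAt_blochVec_theta (θ : ℝ) :
    HasDerivAt (blochVec N 0) (((1 / 2 : ℂ) • (Emat N - Fmat N)) *ᵥ blochVec N 0 θ) θ := by
  refine hasDerivAt_pi.2 fun p => ?_
  have hE : (Emat N *ᵥ blochVec N 0 θ) p = ((p * √(N.choose p) *
      Real.sin (θ / 2) ^ ((p : ℕ) - 1) * Real.cos (θ / 2) ^ (N - p + 1) : ℝ) : ℂ) := by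
    induction p using Fin.cases with
    | zero => simp [Emat_mulVec_zero]
    | succ q =>
      rw [Emat_mulVec_succ, blochVec_zero_apply, ← Complex.ofReal_mul, Complex.ofReal_inj,
        Fin.val_succ, Fin.val_castSucc, Nat.add_sub_cancel, show N - (q + 1) + 1 = N - q by omega]
      push_cast
      linear_combination (Real.sin (θ / 2) ^ (q : ℕ) * Real.cos (θ / 2) ^ (N - q)) *
        sqrt_mul_sqrt_choose N q q.isLt
  have hF : (Fmat N *ᵥ blochVec N 0 θ) p = (((N - p : ℕ) * √(N.choose p) *
      Real.sin (θ / 2) ^ ((p : ℕ) + 1) * Real.cos (θ / 2) ^ (N - p - 1) : ℝ) : ℂ) := by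
    induction p using Fin.lastCases with
    | last => simp [Fmat_mulVec_last]
    | cast q =>
      rw [Fmat_mulVec_castSucc, blochVec_zero_apply, ← Complex.ofReal_mul, Complex.ofReal_inj,
        Fin.val_succ, Fin.val_castSucc, Nat.cast_sub q.isLt.le, Nat.sub_sub]
      linear_combination (Real.sin (θ / 2) ^ ((q : ℕ) + 1) * Real.cos (θ / 2) ^ (N - (q + 1))) *
        sqrt_mul_sqrt_choose_succ N q q.isLt
  have hs : HasDerivAt (fun t => Real.sin (t / 2)) (Real.cos (θ / 2) * (1 / 2)) θ :=
    (Real.hasDerivAt_sin _).comp θ ((hasDerivAt_id θ).div_const 2)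
  have hc : HasDerivAt (fun t => Real.cos (t / 2)) (-Real.sin (θ / 2) * (1 / 2)) θ :=
    (Real.hasDerivAt_cos _).comp θ ((hasDerivAt_id θ).div_const 2)
  have hfun : (fun t => blochVec N 0 t p) = fun t =>
      ((√(N.choose p) * (Real.sin (t / 2) ^ (p : ℕ) * Real.cos (t / 2) ^ (N - p)) : ℝ) : ℂ) :=
    funext fun t => by rw [blochVec_zero_apply, mul_assoc]
  rw [hfun]
  refine (((hs.fun_pow _).mul (hc.fun_pow _)).const_mul _).ofReal_comp.congr_deriv ?_
  rw [smul_mulVec, sub_mulVec, Pi.smul_apply, Pi.sub_apply, hE, hF, smul_eq_mul,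
    ← Complex.ofReal_sub, show (1 / 2 : ℂ) = ((1 / 2 : ℝ) : ℂ) by norm_num,
    ← Complex.ofReal_mul, Complex.ofReal_inj]
  ring

lemma norm_psiState_sub_le_theta (a : Matrix (Fin (N + 1)) (Fin (N + 1)) ℂ) (θ θ' : ℝ) :
    ‖psiState N a 0 θ - psiState N a 0 θ'‖ ≤ opNorm (diracCommutator N a) * |θ - θ'| :=
  norm_star_dotProduct_mulVec_sub_le (conjTranspose_smul_Emat_sub_Fmat N)
    (hasDerivAt_blochVec_theta N)
    (fun t => norm_star_dotProduct_commutator_Emat_sub_Fmat_le N a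
      (star_blochVec_dotProduct_self N 0 t)) θ θ'

lemma norm_psiState_sub_le_phi (a : Matrix (Fin (N + 1)) (Fin (N + 1)) ℂ) (φ φ' θ : ℝ) :
    ‖psiState N a φ θ - psiState N a φ' θ‖ ≤ opNorm (diracCommutator N a) * |φ - φ'| :=
  norm_star_dotProduct_mulVec_sub_le (γ := fun φ => blochVec N φ θ) (conjTranspose_smul_Hmat N)
    (hasDerivAt_blochVec_phi N · θ)
    (fun t => norm_star_dotProduct_commutator_Hmat_le N a (star_blochVec_dotProduct_self N t θ))
    φ φ'

variable {N}

lemma specDist_le {ω ω' : Matrix (Fin (N + 1)) (Fin (N + 1)) ℂ → ℂ} {c : ℝ} (hc : 0 ≤ c)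
    (h : ∀ a, a.IsHermitian → opNorm (diracCommutator N a) ≤ 1 → ‖ω a - ω' a‖ ≤ c) :
    specDist N ω ω' ≤ c :=
  Real.sSup_le (by rintro _ ⟨a, ha, hD, rfl⟩; exact h a ha hD) hc

lemma rhoAux_le_specDist {θ c : ℝ} (h : ∀ a, a.IsHermitian → opNorm (diracCommutator N a) ≤ 1 →
      ‖psiState N a 0 θ - psiState N a 0 0‖ ≤ c) :
    rhoAux N θ ≤ specDist N (fun a => psiState N a 0 θ) (fun a => psiState N a 0 0) := by
  refine csSup_le_csSup ⟨c, ?_⟩ ⟨0, 0, isHermitian_zero, isDiag_zero, ?_, ?_⟩ ?_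
  · rintro _ ⟨a, ha, hD, rfl⟩
    exact h a ha hD
  · change opNorm (diracCommutator N 0) ≤ 1
    simp [diracCommutator_zero, opNorm]
  · simp [psiState]
  · rintro _ ⟨a, ha, -, hD, rfl⟩
    exact ⟨a, ha, hD, rfl⟩

end Spin

theorem specDist_bounds_general (N : ℕ) :
    (∀ θ ∈ Set.Icc (0 : ℝ) Real.pi,
      rhoAux N θ ≤ specDist N (fun a => psiState N a 0 θ) (fun a => psiState N a 0 0) ∧
      specDist N (fun a => psiState N a 0 θ) (fun a => psiState N a 0 0) ≤ θ) ∧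
    (∀ φ ∈ Set.Ioc (-Real.pi) Real.pi,
      specDist N (fun a => psiState N a φ (Real.pi / 2))
        (fun a => psiState N a 0 (Real.pi / 2)) ≤ |φ|) := by
  have meridian : ∀ θ, 0 ≤ θ → ∀ a, a.IsHermitian → opNorm (diracCommutator N a) ≤ 1 →
      ‖psiState N a 0 θ - psiState N a 0 0‖ ≤ θ := fun θ hθ a _ ha => by
    simpa [abs_of_nonneg hθ] using (norm_psiState_sub_le_theta N a θ 0).trans
      (mul_le_of_le_one_left (abs_nonneg _) ha)
  refine ⟨fun θ hθ => ⟨rhoAux_le_specDist (meridian θ hθ.1), specDist_le hθ.1 (meridian θ hθ.1)⟩,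
    fun φ _ => specDist_le (abs_nonneg φ) fun a _ ha => ?_⟩
  simpa using (norm_psiState_sub_le_phi N a φ 0 (Real.pi / 2)).trans
    (mul_le_of_le_one_left (abs_nonneg _) ha)

theorem specDist_bounds (N : ℕ) (hN : 1 ≤ N) :
    (∀ θ ∈ Set.Icc (0 : ℝ) Real.pi,
      rhoAux N θ ≤ specDist N (fun a => psiState N a 0 θ) (fun a => psiState N a 0 0) ∧
      specDist N (fun a => psiState N a 0 θ) (fun a => psiState N a 0 0) ≤ θ) ∧
    (∀ φ ∈ Set.Ioc (-Real.pi) Real.pi,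
      specDist N (fun a => psiState N a φ (Real.pi / 2))
        (fun a => psiState N a 0 (Real.pi / 2)) ≤ |φ|) :=
  specDist_bounds_general N
end
end

section
/- Define s_N := Σ_{k=1}^{N} 1/√(k(N−k+1)) for integers N ≥ 1. Then for every odd N ≥ 1 one has s_N ≥ 2 arcsin((N−1)/(N+1)), and lim_{N→∞} s_N = π. -/
/-!
With `a = N + 1`, the summand `1 / √(k (a - k))` is the derivative at `t = k` of
`t ↦ arcsin ((2t - a) / a)`, which increases from `-arcsin ((N - 1) / (N + 1))` at `t = 1` to
`arcsin ((N - 1) / (N + 1))` at `t = N`. The summand decreases on `(0, a/2]` and increases on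
`[a/2, a)`, so the mean value theorem on unit steps compares `s_N` with the total increment of the
arcsine on each side of the minimum: `s_N` lies between `2 arcsin ((N - 1) / (N + 1))` and this
value plus the two end terms `2 / √N`, and both bounds tend to `π`.
-/

noncomputable section
open Filter

/-- The diameter of the fuzzy sphere: `s_N = Σ_{k=1}^{N} 1/√(k(N−k+1))`. -/
def fuzzyDiam (N : ℕ) : ℝ :=
  ∑ k ∈ Finset.Icc 1 N, 1 / Real.sqrt (k * (N + 1 - k))

open Set Real Topology

section PrimitiveBounds

variable {f F : ℝ → ℝ}

theorem AntitoneOn.sub_le_mul_sub_of_hasDerivAt {x y : ℝ} (hf : AntitoneOn f (Icc x y))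
    (hF : ∀ t ∈ Icc x y, HasDerivAt F (f t) t) (hxy : x ≤ y) :
    F y - F x ≤ f x * (y - x) :=
  (convex_Icc x y).image_sub_le_mul_sub_of_deriv_le
    (fun t ht => (hF t ht).continuousAt.continuousWithinAt)
    (fun t ht => (hF t (interior_subset ht)).differentiableAt.differentiableWithinAt)
    (fun t ht => by
      rw [(hF t (interior_subset ht)).deriv]
      exact hf (left_mem_Icc.2 hxy) (interior_subset ht) (interior_subset ht).1)
    x (left_mem_Icc.2 hxy) y (right_mem_Icc.2 hxy) hxy

theorem AntitoneOn.mul_sub_le_sub_of_hasDerivAt {x y : ℝ} (hf : AntitoneOn f (Icc x y))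
    (hF : ∀ t ∈ Icc x y, HasDerivAt F (f t) t) (hxy : x ≤ y) :
    f y * (y - x) ≤ F y - F x :=
  (convex_Icc x y).mul_sub_le_image_sub_of_le_deriv
    (fun t ht => (hF t ht).continuousAt.continuousWithinAt)
    (fun t ht => (hF t (interior_subset ht)).differentiableAt.differentiableWithinAt)
    (fun t ht => by
      rw [(hF t (interior_subset ht)).deriv]
      exact hf (interior_subset ht) (right_mem_Icc.2 hxy) (interior_subset ht).2)
    x (left_mem_Icc.2 hxy) y (right_mem_Icc.2 hxy) hxy

theorem MonotoneOn.sub_le_mul_sub_of_hasDerivAt {x y : ℝ} (hf : MonotoneOn f (Icc x y))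
    (hF : ∀ t ∈ Icc x y, HasDerivAt F (f t) t) (hxy : x ≤ y) :
    F y - F x ≤ f y * (y - x) := by
  have := hf.neg.mul_sub_le_sub_of_hasDerivAt (F := -F) (fun t ht => (hF t ht).neg) hxy
  simp only [Pi.neg_apply] at this
  linarith

theorem MonotoneOn.mul_sub_le_sub_of_hasDerivAt {x y : ℝ} (hf : MonotoneOn f (Icc x y))
    (hF : ∀ t ∈ Icc x y, HasDerivAt F (f t) t) (hxy : x ≤ y) :
    f x * (y - x) ≤ F y - F x := by
  have := hf.neg.sub_le_mul_sub_of_hasDerivAt (F := -F) (fun t ht => (hF t ht).neg) hxy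
  simp only [Pi.neg_apply] at this
  linarith

theorem AntitoneOn.sub_le_sum_of_hasDerivAt {m n : ℕ} (hmn : m ≤ n)
    (hf : AntitoneOn f (Icc m n)) (hF : ∀ t ∈ Icc (m : ℝ) n, HasDerivAt F (f t) t) :
    F n - F m ≤ ∑ k ∈ Finset.Ico m n, f k := by
  induction n, hmn using Nat.le_induction with
  | base => simp
  | succ n hmn ih =>
    have hsub : Icc (m : ℝ) n ⊆ Icc (m : ℝ) (n + 1 : ℕ) :=
      Icc_subset_Icc_right (by push_cast; linarith)
    have hstep : Icc (n : ℝ) (n + 1 : ℕ) ⊆ Icc (m : ℝ) (n + 1 : ℕ) :=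
      Icc_subset_Icc_left (by exact_mod_cast hmn)
    have := (hf.mono hstep).sub_le_mul_sub_of_hasDerivAt (fun t ht => hF t (hstep ht))
      (by push_cast; linarith)
    rw [Finset.sum_Ico_succ_top hmn]
    push_cast at this ⊢
    linarith [ih (hf.mono hsub) (fun t ht => hF t (hsub ht))]

theorem AntitoneOn.sum_le_sub_of_hasDerivAt {m n : ℕ} (hmn : m ≤ n)
    (hf : AntitoneOn f (Icc m n)) (hF : ∀ t ∈ Icc (m : ℝ) n, HasDerivAt F (f t) t) :
    ∑ k ∈ Finset.Ioc m n, f k ≤ F n - F m := by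
  induction n, hmn using Nat.le_induction with
  | base => simp
  | succ n hmn ih =>
    have hsub : Icc (m : ℝ) n ⊆ Icc (m : ℝ) (n + 1 : ℕ) :=
      Icc_subset_Icc_right (by push_cast; linarith)
    have hstep : Icc (n : ℝ) (n + 1 : ℕ) ⊆ Icc (m : ℝ) (n + 1 : ℕ) :=
      Icc_subset_Icc_left (by exact_mod_cast hmn)
    have := (hf.mono hstep).mul_sub_le_sub_of_hasDerivAt (fun t ht => hF t (hstep ht))
      (by push_cast; linarith)
    rw [Finset.sum_Ioc_succ_top hmn]
    push_cast at this ⊢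
    linarith [ih (hf.mono hsub) (fun t ht => hF t (hsub ht))]

theorem MonotoneOn.sub_le_sum_of_hasDerivAt {m n : ℕ} (hmn : m ≤ n)
    (hf : MonotoneOn f (Icc m n)) (hF : ∀ t ∈ Icc (m : ℝ) n, HasDerivAt F (f t) t) :
    F n - F m ≤ ∑ k ∈ Finset.Ioc m n, f k := by
  have := hf.neg.sum_le_sub_of_hasDerivAt (F := -F) hmn (fun t ht => (hF t ht).neg)
  simp only [Pi.neg_apply, Finset.sum_neg_distrib] at this
  linarith

theorem MonotoneOn.sum_le_sub_of_hasDerivAt {m n : ℕ} (hmn : m ≤ n)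
    (hf : MonotoneOn f (Icc m n)) (hF : ∀ t ∈ Icc (m : ℝ) n, HasDerivAt F (f t) t) :
    ∑ k ∈ Finset.Ico m n, f k ≤ F n - F m := by
  have := hf.neg.sub_le_sum_of_hasDerivAt (F := -F) hmn (fun t ht => (hF t ht).neg)
  simp only [Pi.neg_apply, Finset.sum_neg_distrib] at this
  linarith

end PrimitiveBounds

theorem Finset.sum_Icc_consecutive (f : ℕ → ℝ) {m p n : ℕ} (hmp : m ≤ p) (hpn : p + 1 ≤ n) :
    ∑ k ∈ Finset.Icc m p, f k + ∑ k ∈ Finset.Icc (p + 1) n, f k = ∑ k ∈ Finset.Icc m n, f k := by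
  simp only [← Finset.Ico_add_one_right_eq_Icc]
  exact Finset.sum_Ico_consecutive f (by omega) (by omega)

section Valley

variable {f F : ℝ → ℝ} {m p n : ℕ} {c : ℝ}

/- The nodes `p ≤ c ≤ p + 1` straddle the minimum `c`; the two partial steps `[p, c]` and
`[c, p + 1]` are each paid for by one summand. -/
theorem sub_le_sum_Icc_of_antitoneOn_of_monotoneOn (hmp : m ≤ p) (hpn : p + 1 ≤ n)
    (hpc : (p : ℝ) ≤ c) (hcp : c ≤ p + 1) (hF : ∀ t ∈ Icc (m : ℝ) n, HasDerivAt F (f t) t)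
    (hanti : AntitoneOn f (Icc m c)) (hmono : MonotoneOn f (Icc c n)) (hc : 0 ≤ f c) :
    F n - F m ≤ ∑ k ∈ Finset.Icc m n, f k := by
  have hmp' : (m : ℝ) ≤ p := by exact_mod_cast hmp
  have hpn' : ((p + 1 : ℕ) : ℝ) ≤ n := by exact_mod_cast hpn
  have hcp' : c ≤ ((p + 1 : ℕ) : ℝ) := by push_cast; exact hcp
  have hF' {x y : ℝ} (hx : m ≤ x) (hy : y ≤ n) : ∀ t ∈ Icc x y, HasDerivAt F (f t) t :=
    fun t ht => hF t ⟨hx.trans ht.1, ht.2.trans hy⟩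
  have hleft := (hanti.mono (Icc_subset_Icc_right hpc)).sub_le_sum_of_hasDerivAt hmp
    (hF' le_rfl (by linarith))
  have hmidl := (hanti.mono (Icc_subset_Icc_left hmp')).sub_le_mul_sub_of_hasDerivAt
    (hF' hmp' (by linarith)) hpc
  have hmidr := (hmono.mono (Icc_subset_Icc_right hpn')).sub_le_mul_sub_of_hasDerivAt
    (hF' (by linarith) hpn') hcp'
  have hright := (hmono.mono (Icc_subset_Icc_left hcp')).sub_le_sum_of_hasDerivAt hpn
    (hF' (by linarith) le_rfl)
  have hfp : 0 ≤ f p := hc.trans (hanti ⟨hmp', hpc⟩ ⟨hmp'.trans hpc, le_rfl⟩ hpc)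
  have hfp1 : 0 ≤ f ((p + 1 : ℕ) : ℝ) := hc.trans (hmono ⟨le_rfl, by linarith⟩ ⟨hcp', hpn'⟩ hcp')
  have hmidl' : f p * (c - p) ≤ f p := mul_le_of_le_one_right hfp (by linarith)
  have hmidr' : f ((p + 1 : ℕ) : ℝ) * ((p + 1 : ℕ) - c) ≤ f ((p + 1 : ℕ) : ℝ) :=
    mul_le_of_le_one_right hfp1 (by push_cast; linarith)
  rw [← Finset.sum_Icc_consecutive _ hmp hpn, Finset.Icc_eq_cons_Ico hmp, Finset.sum_cons,
    Finset.Icc_eq_cons_Ioc hpn, Finset.sum_cons]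
  linarith

theorem sum_Icc_le_sub_add_of_antitoneOn_of_monotoneOn (hmp : m ≤ p) (hpn : p + 1 ≤ n)
    (hpc : (p : ℝ) ≤ c) (hcp : c ≤ p + 1) (hF : ∀ t ∈ Icc (m : ℝ) n, HasDerivAt F (f t) t)
    (hanti : AntitoneOn f (Icc m c)) (hmono : MonotoneOn f (Icc c n)) (hc : 0 ≤ f c) :
    ∑ k ∈ Finset.Icc m n, f k ≤ F n - F m + f m + f n := by
  have hmp' : (m : ℝ) ≤ p := by exact_mod_cast hmp
  have hpn' : ((p + 1 : ℕ) : ℝ) ≤ n := by exact_mod_cast hpn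
  have hcp' : c ≤ ((p + 1 : ℕ) : ℝ) := by push_cast; exact hcp
  have hF' {x y : ℝ} (hx : m ≤ x) (hy : y ≤ n) : ∀ t ∈ Icc x y, HasDerivAt F (f t) t :=
    fun t ht => hF t ⟨hx.trans ht.1, ht.2.trans hy⟩
  have hleft := (hanti.mono (Icc_subset_Icc_right hpc)).sum_le_sub_of_hasDerivAt hmp
    (hF' le_rfl (by linarith))
  have hmidl := (hanti.mono (Icc_subset_Icc_left hmp')).mul_sub_le_sub_of_hasDerivAt
    (hF' hmp' (by linarith)) hpc
  have hmidr := (hmono.mono (Icc_subset_Icc_right hpn')).mul_sub_le_sub_of_hasDerivAt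
    (hF' (by linarith) hpn') hcp'
  have hright := (hmono.mono (Icc_subset_Icc_left hcp')).sum_le_sub_of_hasDerivAt hpn
    (hF' (by linarith) le_rfl)
  have hmidl' : 0 ≤ f c * (c - p) := mul_nonneg hc (by linarith)
  have hmidr' : 0 ≤ f c * ((p + 1 : ℕ) - c) := mul_nonneg hc (by linarith)
  rw [← Finset.sum_Icc_consecutive _ hmp hpn, Finset.Icc_eq_cons_Ioc hmp, Finset.sum_cons,
    Finset.Icc_eq_cons_Ico hpn, Finset.sum_cons]
  linarith

end Valley

def fuzzyDensity (a t : ℝ) : ℝ := 1 / √(t * (a - t))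

def fuzzyAngle (a t : ℝ) : ℝ := arcsin ((2 * t - a) / a)

theorem fuzzyDensity_nonneg (a t : ℝ) : 0 ≤ fuzzyDensity a t := by
  unfold fuzzyDensity; positivity

theorem hasDerivAt_fuzzyAngle {a t : ℝ} (ht : 0 < t) (hta : t < a) :
    HasDerivAt (fuzzyAngle a) (fuzzyDensity a t) t := by
  have ha : 0 < a := ht.trans hta
  have hx : 1 - ((2 * t - a) / a) ^ 2 = (2 / a) ^ 2 * (t * (a - t)) := by
    field_simp; ring
  have hlo : (2 * t - a) / a ≠ -1 := by
    rw [Ne, div_eq_iff ha.ne']; linarith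
  have hhi : (2 * t - a) / a ≠ 1 := by
    rw [Ne, div_eq_iff ha.ne']; linarith
  have hinner : HasDerivAt (fun t => (2 * t - a) / a) (2 / a) t := by
    simpa using (((hasDerivAt_id t).const_mul 2).sub_const a).div_const a
  refine ((hasDerivAt_arcsin hlo hhi).comp t hinner).congr_deriv ?_
  rw [fuzzyDensity, hx, sqrt_mul (sq_nonneg _), sqrt_sq (by positivity)]
  field_simp

theorem fuzzyDensity_antitoneOn (a : ℝ) : AntitoneOn (fuzzyDensity a) (Ioc 0 (a / 2)) := by
  intro s hs t ht hst
  apply one_div_le_one_div_of_le (sqrt_pos.2 (by nlinarith [hs.1, hs.2]))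
  exact sqrt_le_sqrt (by nlinarith [hs.1, ht.2])

theorem fuzzyDensity_monotoneOn (a : ℝ) : MonotoneOn (fuzzyDensity a) (Ico (a / 2) a) := by
  intro s hs t ht hst
  apply one_div_le_one_div_of_le (sqrt_pos.2 (by nlinarith [ht.1, ht.2]))
  exact sqrt_le_sqrt (by nlinarith [hs.1, ht.2])

theorem tendsto_two_arcsin :
    Tendsto (fun N : ℕ => 2 * arcsin (((N : ℝ) - 1) / ((N : ℝ) + 1))) atTop (𝓝 π) := by
  have hratio : Tendsto (fun N : ℕ => ((N : ℝ) - 1) / ((N : ℝ) + 1)) atTop (𝓝 1) := by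
    simpa [sub_div] using
      (tendsto_natCast_div_add_atTop (1 : ℝ)).sub tendsto_one_div_add_atTop_nhds_zero_nat
  simpa [arcsin_one, mul_div_cancel₀] using
    ((continuous_arcsin.tendsto 1).comp hratio).const_mul 2

theorem tendsto_two_div_sqrt : Tendsto (fun N : ℕ => 2 / √(N : ℝ)) atTop (𝓝 0) :=
  tendsto_const_nhds.div_atTop (tendsto_sqrt_atTop.comp tendsto_natCast_atTop_atTop)

theorem fuzzyAngle_one (x : ℝ) : fuzzyAngle (x + 1) 1 = -arcsin ((x - 1) / (x + 1)) := by
  rw [fuzzyAngle, ← arcsin_neg]; congr 1; ring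

theorem fuzzyAngle_self (x : ℝ) : fuzzyAngle (x + 1) x = arcsin ((x - 1) / (x + 1)) := by
  rw [fuzzyAngle]; congr 1; ring

theorem fuzzyDensity_one (x : ℝ) : fuzzyDensity (x + 1) 1 = 1 / √x := by
  rw [fuzzyDensity]; congr 2; ring

theorem fuzzyDensity_self (x : ℝ) : fuzzyDensity (x + 1) x = 1 / √x := by
  rw [fuzzyDensity]; congr 2; ring

theorem fuzzyDiam_bounds {N : ℕ} (hN : 2 ≤ N) :
    2 * arcsin (((N : ℝ) - 1) / ((N : ℝ) + 1)) ≤ fuzzyDiam N ∧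
      fuzzyDiam N ≤ 2 * arcsin (((N : ℝ) - 1) / ((N : ℝ) + 1)) + 2 / √(N : ℝ) := by
  have hN' : (2 : ℝ) ≤ N := by exact_mod_cast hN
  have hp_lo : 2 * (((N + 1) / 2 : ℕ) : ℝ) ≤ N + 1 := by
    exact_mod_cast Nat.mul_div_le (N + 1) 2
  have hp_hi : (N : ℝ) + 1 ≤ 2 * (((N + 1) / 2 : ℕ) : ℝ) + 1 := by
    exact_mod_cast (by omega : N + 1 ≤ 2 * ((N + 1) / 2) + 1)
  have hF : ∀ t ∈ Icc ((1 : ℕ) : ℝ) N,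
      HasDerivAt (fuzzyAngle (N + 1)) (fuzzyDensity (N + 1) t) t := fun t ht => by
    rw [Nat.cast_one] at ht
    exact hasDerivAt_fuzzyAngle (by linarith [ht.1]) (by linarith [ht.2])
  have hanti : AntitoneOn (fuzzyDensity (N + 1)) (Icc ((1 : ℕ) : ℝ) ((N + 1) / 2)) :=
    (fuzzyDensity_antitoneOn _).mono fun t ht => ⟨by rw [Nat.cast_one] at ht; linarith [ht.1], ht.2⟩
  have hmono : MonotoneOn (fuzzyDensity (N + 1)) (Icc ((N + 1) / 2) N) :=
    (fuzzyDensity_monotoneOn _).mono fun t ht => ⟨ht.1, by linarith [ht.2]⟩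
  have hlow := sub_le_sum_Icc_of_antitoneOn_of_monotoneOn (p := (N + 1) / 2) (by omega)
    (by omega) (by linarith) (by linarith) hF hanti hmono (fuzzyDensity_nonneg _ _)
  have hup := sum_Icc_le_sub_add_of_antitoneOn_of_monotoneOn (p := (N + 1) / 2) (by omega)
    (by omega) (by linarith) (by linarith) hF hanti hmono (fuzzyDensity_nonneg _ _)
  simp only [Nat.cast_one, fuzzyAngle_one, fuzzyAngle_self, fuzzyDensity_one,
    fuzzyDensity_self] at hlow hup
  have hsum : fuzzyDiam N = ∑ k ∈ Finset.Icc 1 N, fuzzyDensity (N + 1) k := rfl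
  have htwo : 2 / √(N : ℝ) = 1 / √(N : ℝ) + 1 / √(N : ℝ) := by ring
  constructor <;> linarith

theorem fuzzyDiam_tendsto_pi :
    (∀ N : ℕ, 1 ≤ N → Odd N →
      2 * Real.arcsin (((N : ℝ) - 1) / ((N : ℝ) + 1)) ≤ fuzzyDiam N) ∧
    Tendsto fuzzyDiam atTop (nhds Real.pi) := by
  refine ⟨fun N hN _ => ?_, ?_⟩
  · rcases hN.eq_or_lt with rfl | hN
    · norm_num [fuzzyDiam]
    · exact (fuzzyDiam_bounds hN).1
  · exact tendsto_of_tendsto_of_tendsto_of_le_of_le' tendsto_two_arcsin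
      (by simpa using tendsto_two_arcsin.add tendsto_two_div_sqrt)
      (eventually_atTop.2 ⟨2, fun N hN => (fuzzyDiam_bounds hN).1⟩)
      (eventually_atTop.2 ⟨2, fun N hN => (fuzzyDiam_bounds hN).2⟩)
end
end
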